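/- Let 0 < q < p be two unit prices for commodity X1 (a quantity-discount/non-linear price schedule), r > 0 the unit price of X2, m > 0 the budget, and x̄ > 0 a threshold quantity with p·x̄ < m. Then the decision space B = {(x1, x2) ∈ ℝ² : x1 ≥ 0 ∧ x2 ≥ 0 ∧ ((x1 ≤ x̄ ∧ p·x1 + r·x2 ≤ m) ∨ (x1 > x̄ ∧ q·x1 + r·x2 ≤ m))} is not a convex subset of ℝ². -/

import Mathlib

/-- Under a quantity-discount (non-linear) price schedule with
`0 < q < p` below/above the threshold `x̄` and `p * x̄ < m`, the decision
space is not convex. -/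
theorem statement14 (p q r m xbar : ℝ)
    (hq : 0 < q) (hqp : q < p) (hr : 0 < r) (hm : 0 < m)
    (hxbar : 0 < xbar) (hthr : p * xbar < m) :
    ¬ Convex ℝ {z : ℝ × ℝ | 0 ≤ z.1 ∧ 0 ≤ z.2 ∧
        ((z.1 ≤ xbar ∧ p * z.1 + r * z.2 ≤ m) ∨
         (xbar < z.1 ∧ q * z.1 + r * z.2 ≤ m))} := by
  intro h
  have hqx : q * xbar < m := lt_trans (by nlinarith) hthr
  set c : ℝ := (xbar + m / q) / 2 with hc
  have hxc : xbar < c := by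
    have : xbar < m / q := (lt_div_iff₀ hq).2 (by linarith [mul_comm q xbar])
    rw [hc]; linarith
  have hc0 : 0 < c := lt_trans hxbar hxc
  have hqc : q * c < m := by
    have h1 : c < m / q := by
      have : xbar < m / q := (lt_div_iff₀ hq).2 (by linarith [mul_comm q xbar])
      rw [hc]; linarith
    calc q * c < q * (m / q) := by nlinarith
    _ = m := by field_simp
  set t : ℝ := xbar / c with ht
  have ht0 : 0 < t := div_pos hxbar hc0
  have ht1 : t < 1 := (div_lt_one hc0).2 hxc
  have htc : t * c = xbar := by rw [ht]; exact div_mul_cancel₀ xbar (ne_of_gt hc0)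
  have hD : ((0 : ℝ), m / r) ∈ {z : ℝ × ℝ | 0 ≤ z.1 ∧ 0 ≤ z.2 ∧
        ((z.1 ≤ xbar ∧ p * z.1 + r * z.2 ≤ m) ∨
         (xbar < z.1 ∧ q * z.1 + r * z.2 ≤ m))} := by
    refine ⟨le_refl 0, le_of_lt (div_pos hm hr), Or.inl ⟨le_of_lt hxbar, ?_⟩⟩
    have : r * (m / r) = m := by field_simp
    simp [this]
  have hE : ((c : ℝ), (m - q * c) / r) ∈ {z : ℝ × ℝ | 0 ≤ z.1 ∧ 0 ≤ z.2 ∧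
        ((z.1 ≤ xbar ∧ p * z.1 + r * z.2 ≤ m) ∨
         (xbar < z.1 ∧ q * z.1 + r * z.2 ≤ m))} := by
    refine ⟨le_of_lt hc0, le_of_lt (div_pos (by linarith) hr), Or.inr ⟨hxc, ?_⟩⟩
    have : r * ((m - q * c) / r) = m - q * c := by field_simp
    rw [this]; linarith
  have hmem := h hD hE (by linarith : (0:ℝ) ≤ 1 - t) (le_of_lt ht0) (by ring)
  have hz1 : ((1 - t) • ((0 : ℝ), m / r) + t • ((c : ℝ), (m - q * c) / r)).1 = xbar := by
    simp [Prod.smul_mk, htc, mul_comm]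
  have hz2 : ((1 - t) • ((0 : ℝ), m / r) + t • ((c : ℝ), (m - q * c) / r)).2
      = (m - q * xbar) / r := by
    simp only [Prod.smul_mk, Prod.mk_add_mk, Prod.snd, smul_eq_mul]
    rw [← htc]
    field_simp
    ring
  obtain ⟨h1, h2, hcase⟩ := hmem
  rw [hz1] at hcase
  rw [hz2] at hcase
  rcases hcase with ⟨_, hb⟩ | ⟨hlt, _⟩
  · have : r * ((m - q * xbar) / r) = m - q * xbar := by field_simp
    rw [this] at hb
    nlinarith
  · exact lt_irrefl xbar hlt
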